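/- Let K be an existentially closed C-avoiding field. Then K is large: for every finitely generated K-algebra A that is an integral domain of Krull dimension 1 and is smooth over K, if there exists a K-algebra homomorphism A → K, then there exist infinitely many distinct K-algebra homomorphisms A → K. -/

import Mathlib

universe u

/-- `K` is existentially closed in the field extension `L`. -/
def ExistentiallyClosedIn (K L : Type u) [Field K] [Field L]
    [Algebra K L] : Prop :=
  ∀ (n : ℕ) (s t : Finset (MvPolynomial (Fin n) K)),
    (∃ x : Fin n → L, (∀ p ∈ s, MvPolynomial.aeval x p = 0) ∧
      (∀ q ∈ t, MvPolynomial.aeval x q ≠ 0)) →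
    (∃ x : Fin n → K, (∀ p ∈ s, MvPolynomial.aeval x p = 0) ∧
      (∀ q ∈ t, MvPolynomial.aeval x q ≠ 0))

/-- A field avoids the curve `C : x ^ 4 + y ^ 4 + 1 = 0`. -/
def AvoidsC (L : Type u) [Field L] : Prop :=
  ¬ ∃ x y : L, x ^ 4 + y ^ 4 + 1 = 0

/-- `K` is an existentially closed `C`-avoiding field. -/
def ECAvoidsC (K : Type u) [Field K] : Prop :=
  CharZero K ∧ AvoidsC K ∧
    ∀ (L : Type u) [Field L] [Algebra K L], AvoidsC L → ExistentiallyClosedIn K L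

open PowerSeries

section AvoidLemmas
variable {K : Type u} [Field K]

lemma avoids_hom (h : AvoidsC K) {a b c : K} (habc : a ^ 4 + b ^ 4 + c ^ 4 = 0) :
    a = 0 ∧ b = 0 ∧ c = 0 := by
  by_cases hc : c = 0
  · subst hc
    by_cases hb : b = 0
    · subst hb
      refine ⟨?_, rfl, rfl⟩
      have : a ^ 4 = 0 := by linear_combination habc
      exact pow_eq_zero_iff (by norm_num) |>.mp this
    · exact absurd ⟨a / b, 0, by field_simp; linear_combination habc⟩ h
  · exact absurd ⟨a / c, b / c, by field_simp; linear_combination habc⟩ h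

open PowerSeries in
lemma ps_coeff (h : AvoidsC K) : ∀ (n : ℕ) (f g w : K⟦X⟧), f ^ 4 + g ^ 4 + w ^ 4 = 0 →
    coeff n f = 0 ∧ coeff n g = 0 ∧ coeff n w = 0 := by
  have cc0 : ∀ f g w : K⟦X⟧, f ^ 4 + g ^ 4 + w ^ 4 = 0 →
      constantCoeff f = 0 ∧ constantCoeff g = 0 ∧ constantCoeff w = 0 := by
    intro f g w hfgw
    have := congrArg (constantCoeff) hfgw
    simp only [map_add, map_pow, map_zero] at this
    exact avoids_hom h this
  intro n
  induction n with
  | zero =>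
    intro f g w hfgw
    simpa only [coeff_zero_eq_constantCoeff] using cc0 f g w hfgw
  | succ n ih =>
    intro f g w hfgw
    obtain ⟨h1, h2, h3⟩ := cc0 f g w hfgw
    obtain ⟨f', rfl⟩ := X_dvd_iff.mpr h1
    obtain ⟨g', rfl⟩ := X_dvd_iff.mpr h2
    obtain ⟨w', rfl⟩ := X_dvd_iff.mpr h3
    have hX : (X : K⟦X⟧) ^ 4 ≠ 0 := pow_ne_zero _ X_ne_zero
    have key : f' ^ 4 + g' ^ 4 + w' ^ 4 = 0 := by
      have : (X : K⟦X⟧) ^ 4 * (f' ^ 4 + g' ^ 4 + w' ^ 4) = 0 := by linear_combination hfgw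
      exact (mul_eq_zero.mp this).resolve_left hX
    obtain ⟨a1, a2, a3⟩ := ih f' g' w' key
    rw [coeff_succ_X_mul, coeff_succ_X_mul, coeff_succ_X_mul]
    exact ⟨a1, a2, a3⟩



open PowerSeries in
lemma ps_all_zero {K : Type u} [Field K] (h : AvoidsC K) (f g w : K⟦X⟧)
    (hfgw : f ^ 4 + g ^ 4 + w ^ 4 = 0) : f = 0 ∧ g = 0 ∧ w = 0 := by
  refine ⟨PowerSeries.ext fun n => ?_, PowerSeries.ext fun n => ?_, PowerSeries.ext fun n => ?_⟩
  · simpa using (ps_coeff h n f g w hfgw).1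
  · simpa using (ps_coeff h n f g w hfgw).2.1
  · simpa using (ps_coeff h n f g w hfgw).2.2

open PowerSeries in
lemma avoidsC_frac {K : Type u} [Field K] (h : AvoidsC K) :
    AvoidsC (FractionRing (K⟦X⟧)) := by
  rintro ⟨x, y, hxy⟩
  let R := K⟦X⟧
  let L := FractionRing R
  obtain ⟨⟨f1, g1⟩, hx⟩ := IsLocalization.surj (nonZeroDivisors R) x
  obtain ⟨⟨f2, g2⟩, hy⟩ := IsLocalization.surj (nonZeroDivisors R) y
  let u := algebraMap R L
  show False
  have key : u ((f1 * (g2 : R)) ^ 4 + ((g1 : R) * f2) ^ 4 + ((g1 : R) * (g2 : R)) ^ 4) = 0 := by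
    push_cast [map_add, map_pow, map_mul]
    rw [← hx, ← hy]
    linear_combination (u g1 * u g2) ^ 4 * hxy
  have keyR : (f1 * (g2 : R)) ^ 4 + ((g1 : R) * f2) ^ 4 + ((g1 : R) * (g2 : R)) ^ 4 = 0 := by
    have := IsFractionRing.injective R L
    rw [← map_zero u] at key
    exact this key
  have := (ps_all_zero h _ _ _ keyR).2.2
  have hg1 : (g1 : R) ≠ 0 := nonZeroDivisors.coe_ne_zero g1
  have hg2 : (g2 : R) ≠ 0 := nonZeroDivisors.coe_ne_zero g2
  exact (mul_ne_zero hg1 hg2) this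

end AvoidLemmas

section Deriv
variable {K A : Type u} [Field K] [CommRing A] [IsDomain A] [Algebra K A]

/-- There is a nonzero "derivation at φ" when ker φ ≠ its square. -/
lemma exists_deriv (hnoeth : IsNoetherianRing A) (hdim : ringKrullDim A = 1) (φ : A →ₐ[K] K) :
    ∃ δ : A → K, (∀ a b, δ (a + b) = δ a + δ b) ∧ (∀ k : K, δ (algebraMap K A k) = 0) ∧
      (∀ a b, δ (a * b) = φ a * δ b + φ b * δ a) ∧ (∃ a, φ a = 0 ∧ δ a ≠ 0) := by
  classical
  set m : Ideal A := RingHom.ker φ with hm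
  -- m ≠ ⊥
  have hm_ne_bot : m ≠ ⊥ := by
    intro hbot
    have hinj : Function.Injective φ := by
      rw [RingHom.injective_iff_ker_eq_bot]; exact hbot
    have hsurj : Function.Surjective (algebraMap K A) := by
      intro a
      refine ⟨φ a, ?_⟩
      have : φ (algebraMap K A (φ a) - a) = 0 := by simp
      have h2 : algebraMap K A (φ a) - a ∈ m := this
      rw [hbot] at h2
      have := (Submodule.mem_bot A).mp h2
      exact sub_eq_zero.mp this
    have hinj2 : Function.Injective (algebraMap K A) := (algebraMap K A).injective
    have e : K ≃+* A := RingEquiv.ofBijective (algebraMap K A) ⟨hinj2, hsurj⟩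
    have := ringKrullDim_eq_of_ringEquiv e
    rw [ringKrullDim_eq_zero_of_field K] at this
    rw [hdim] at this
    exact absurd this.symm (by norm_num)
  -- m ≠ m ^ 2 : find x ∈ m, x ∉ m ^ 2
  have hx : ∃ x ∈ m, x ∉ m ^ 2 := by
    by_contra hcon
    push_neg at hcon
    have hle : m ≤ m • m := by
      intro x hxm
      rw [Ideal.smul_eq_mul, ← pow_two]
      exact hcon x hxm
    obtain ⟨r, hr1, hr2⟩ :=
      Submodule.exists_sub_one_mem_and_smul_eq_zero_of_fg_of_le_smul m m
        (IsNoetherian.noetherian m) hle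
    obtain ⟨x0, hx0m, hx0⟩ := Submodule.exists_mem_ne_zero_of_ne_bot hm_ne_bot
    have : r * x0 = 0 := hr2 x0 hx0m
    rcases mul_eq_zero.mp this with h | h
    · subst h
      have : (-1 : A) ∈ m := by simpa using hr1
      have h1 : (1 : A) ∈ m := by simpa using m.neg_mem this
      have : φ 1 = 0 := h1
      simp at this
    · exact hx0 h
  obtain ⟨x, hxm, hxm2⟩ := hx
  -- the quotient A ⧸ m², and a functional
  set V := A ⧸ (m ^ 2)
  set π : A →ₗ[K] V := (Ideal.Quotient.mkₐ K (m ^ 2)).toLinearMap with hπ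
  have hπx : π x ≠ 0 := by
    intro h0
    exact hxm2 ((Ideal.Quotient.eq_zero_iff_mem).mp h0)
  obtain ⟨l, hl⟩ : ∃ l : Module.Dual K V, l (π x) ≠ 0 := by
    by_contra hcon
    push_neg at hcon
    exact hπx ((Module.forall_dual_apply_eq_zero_iff K (π x)).mp hcon)
  refine ⟨fun a => l (π (a - algebraMap K A (φ a))), ?_, ?_, ?_, ⟨x, hxm, ?_⟩⟩
  · intro a b
    have harg : (a + b) - algebraMap K A (φ (a + b)) =
        (a - algebraMap K A (φ a)) + (b - algebraMap K A (φ b)) := by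
      rw [map_add, map_add]; ring
    show l (π ((a + b) - algebraMap K A (φ (a + b)))) = _
    rw [harg, map_add, map_add]
  · intro k
    simp
  · intro a b
    have hmem : (a - algebraMap K A (φ a)) * (b - algebraMap K A (φ b)) ∈ m ^ 2 := by
      rw [pow_two]
      refine Ideal.mul_mem_mul ?_ ?_
      · show φ _ = 0; simp
      · show φ _ = 0; simp
    have hid : a * b - algebraMap K A (φ (a * b)) =
        algebraMap K A (φ a) * (b - algebraMap K A (φ b)) +
        algebraMap K A (φ b) * (a - algebraMap K A (φ a)) +
        (a - algebraMap K A (φ a)) * (b - algebraMap K A (φ b)) := by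
      rw [map_mul, map_mul]
      ring
    show l (π (a * b - algebraMap K A (φ (a * b)))) =
      φ a * l (π (b - algebraMap K A (φ b))) + φ b * l (π (a - algebraMap K A (φ a)))
    rw [hid]
    rw [map_add, map_add, map_add, map_add]
    have hz : π ((a - algebraMap K A (φ a)) * (b - algebraMap K A (φ b))) = 0 := by
      simpa [hπ] using (Ideal.Quotient.eq_zero_iff_mem).mpr hmem
    rw [hz, map_zero, add_zero]
    have h1 : ∀ (k : K) (y : A), π (algebraMap K A k * y) = k • π y := by
      intro k y
      rw [← Algebra.smul_def, map_smul]
    rw [h1, h1, map_smul, map_smul, smul_eq_mul, smul_eq_mul]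
  · show l (π (x - algebraMap K A (φ x))) ≠ 0
    have hφx : φ x = 0 := hxm
    rw [hφx, map_zero, sub_zero]
    exact hl

section Tower
variable (K : Type u) [Field K]

noncomputable def Iexp (n : ℕ) : Ideal (K⟦X⟧) := Ideal.span {(X : K⟦X⟧) ^ (n + 2)}

lemma Iexp_def (n : ℕ) : Iexp K n = Ideal.span {(X : K⟦X⟧) ^ (n + 2)} := rfl

lemma Iexp_le (n : ℕ) : Iexp K (n + 1) ≤ Iexp K n := by
  rw [Iexp, Ideal.span_le]
  rintro y rfl
  exact Ideal.mem_span_singleton'.mpr ⟨X, by ring⟩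

noncomputable def qmap (n : ℕ) : (K⟦X⟧ ⧸ Iexp K (n + 1)) →ₐ[K] (K⟦X⟧ ⧸ Iexp K n) :=
  Ideal.Quotient.liftₐ _ (Ideal.Quotient.mkₐ K (Iexp K n))
    (fun a ha => by
      rw [Ideal.Quotient.mkₐ_eq_mk, Ideal.Quotient.eq_zero_iff_mem]
      exact Iexp_le K n ha)

lemma qmap_mk (n : ℕ) (f : K⟦X⟧) :
    qmap K n (Ideal.Quotient.mk (Iexp K (n + 1)) f) = Ideal.Quotient.mk (Iexp K n) f := by
  simp [qmap]
  rfl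

lemma qmap_surj (n : ℕ) : Function.Surjective (qmap K n) := by
  intro b
  obtain ⟨f, rfl⟩ := Ideal.Quotient.mk_surjective b
  exact ⟨Ideal.Quotient.mk _ f, qmap_mk K n f⟩

lemma qmap_ker_nilpotent (n : ℕ) :
    IsNilpotent (RingHom.ker (qmap K n : (K⟦X⟧ ⧸ Iexp K (n + 1)) →+* (K⟦X⟧ ⧸ Iexp K n))) := by
  refine ⟨2, ?_⟩
  have hle : RingHom.ker (qmap K n : (K⟦X⟧ ⧸ Iexp K (n + 1)) →+* (K⟦X⟧ ⧸ Iexp K n)) ≤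
      (Iexp K n).map (Ideal.Quotient.mk (Iexp K (n + 1))) := by
    intro x hx
    obtain ⟨f, rfl⟩ := Ideal.Quotient.mk_surjective x
    have : qmap K n (Ideal.Quotient.mk _ f) = 0 := hx
    rw [qmap_mk, Ideal.Quotient.eq_zero_iff_mem] at this
    exact Ideal.mem_map_of_mem _ this
  have h2 : ((Iexp K n).map (Ideal.Quotient.mk (Iexp K (n + 1)))) ^ 2 = ⊥ := by
    rw [← Ideal.map_pow]
    have : (Iexp K n) ^ 2 ≤ Iexp K (n + 1) := by
      rw [Iexp, Ideal.span_singleton_pow, Iexp, Ideal.span_le]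
      rintro y rfl
      exact Ideal.mem_span_singleton'.mpr ⟨X ^ (n + 1), by ring⟩
    have := Ideal.map_mono (f := Ideal.Quotient.mk (Iexp K (n + 1))) this
    rwa [Ideal.map_quotient_self, le_bot_iff] at this
  have hker2 : (RingHom.ker (qmap K n : (K⟦X⟧ ⧸ Iexp K (n + 1)) →+* (K⟦X⟧ ⧸ Iexp K n))) ^ 2 ≤
      ((Iexp K n).map (Ideal.Quotient.mk (Iexp K (n + 1)))) ^ 2 := by
    rw [pow_two, pow_two]
    exact Ideal.mul_mono hle hle
  rw [h2] at hker2
  exact le_bot_iff.mp hker2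

variable {K}
variable {A : Type u} [CommRing A] [Algebra K A] [Algebra.FormallySmooth K A]

noncomputable def tower (ψ0 : A →ₐ[K] K⟦X⟧ ⧸ Iexp K 0) : (n : ℕ) → A →ₐ[K] K⟦X⟧ ⧸ Iexp K n
  | 0 => ψ0
  | n + 1 => Algebra.FormallySmooth.liftOfSurjective (tower ψ0 n) (qmap K n)
      (qmap_surj K n) (qmap_ker_nilpotent K n)

lemma tower_compat (ψ0 : A →ₐ[K] K⟦X⟧ ⧸ Iexp K 0) (n : ℕ) (a : A) :
    qmap K n (tower ψ0 (n + 1) a) = tower ψ0 n a := by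
  rw [tower]
  exact Algebra.FormallySmooth.liftOfSurjective_apply _ _ _ _ a

lemma coeff_agree {n k : ℕ} (hk : k ≤ n + 1) {f g : K⟦X⟧}
    (h : Ideal.Quotient.mk (Iexp K n) f = Ideal.Quotient.mk (Iexp K n) g) :
    coeff k f = coeff k g := by
  have hmem : f - g ∈ Iexp K n := Ideal.Quotient.eq.mp h
  obtain ⟨a, ha⟩ := Ideal.mem_span_singleton'.mp hmem
  have hc : coeff k (f - g) = 0 := by
    rw [← ha, coeff_mul_X_pow', if_neg (by omega)]
  rw [map_sub] at hc
  exact sub_eq_zero.mp hc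

noncomputable def rep {n : ℕ} (b : K⟦X⟧ ⧸ Iexp K n) : K⟦X⟧ :=
  (Ideal.Quotient.mk_surjective b).choose

lemma rep_spec {n : ℕ} (b : K⟦X⟧ ⧸ Iexp K n) : Ideal.Quotient.mk (Iexp K n) (rep b) = b :=
  (Ideal.Quotient.mk_surjective b).choose_spec

noncomputable def cf (ψ0 : A →ₐ[K] K⟦X⟧ ⧸ Iexp K 0) (n k : ℕ) (a : A) : K :=
  coeff k (rep (tower ψ0 n a))

lemma cf_eq (ψ0 : A →ₐ[K] K⟦X⟧ ⧸ Iexp K 0) {n k : ℕ} (hk : k ≤ n + 1) (a : A) {f : K⟦X⟧}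
    (hf : Ideal.Quotient.mk (Iexp K n) f = tower ψ0 n a) :
    cf ψ0 n k a = coeff k f := by
  exact coeff_agree hk (by rw [rep_spec, hf])

lemma cf_succ (ψ0 : A →ₐ[K] K⟦X⟧ ⧸ Iexp K 0) {n k : ℕ} (hk : k ≤ n + 1) (a : A) :
    cf ψ0 (n + 1) k a = cf ψ0 n k a := by
  rw [cf, cf]
  apply coeff_agree hk
  have h1 : Ideal.Quotient.mk (Iexp K n) (rep (tower ψ0 (n + 1) a)) = tower ψ0 n a := by
    rw [← qmap_mk K n, rep_spec, tower_compat]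
  rw [h1, rep_spec]

lemma cf_stable (ψ0 : A →ₐ[K] K⟦X⟧ ⧸ Iexp K 0) {n k : ℕ} (hk : k ≤ n) (a : A) :
    cf ψ0 n k a = cf ψ0 k k a := by
  obtain ⟨m, rfl⟩ := Nat.exists_eq_add_of_le hk
  induction m with
  | zero => rfl
  | succ m ih =>
    have : k + (m + 1) = (k + m) + 1 := by omega
    rw [this, cf_succ ψ0 (by omega) a, ih (by omega)]

noncomputable def limitF (ψ0 : A →ₐ[K] K⟦X⟧ ⧸ Iexp K 0) : A →ₐ[K] K⟦X⟧ where
  toFun a := PowerSeries.mk fun k => cf ψ0 k k a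
  map_one' := by
    ext k
    rw [coeff_mk]
    rw [cf_eq ψ0 (Nat.le_succ k) 1 (f := 1) (by rw [map_one, map_one])]
  map_mul' a b := by
    ext k
    rw [coeff_mk]
    set f1 := rep (tower ψ0 k a)
    set f2 := rep (tower ψ0 k b)
    have h1 : Ideal.Quotient.mk (Iexp K k) (f1 * f2) = tower ψ0 k (a * b) := by
      rw [map_mul, map_mul, rep_spec, rep_spec]
    rw [cf_eq ψ0 (Nat.le_succ k) (a * b) h1, PowerSeries.coeff_mul, PowerSeries.coeff_mul]
    refine Finset.sum_congr rfl ?_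
    intro p hp
    rw [Finset.HasAntidiagonal.mem_antidiagonal] at hp
    rw [coeff_mk, coeff_mk]
    rw [← cf_eq ψ0 (show p.1 ≤ k + 1 by omega) a (rep_spec _),
      ← cf_eq ψ0 (show p.2 ≤ k + 1 by omega) b (rep_spec _),
      cf_stable ψ0 (show p.1 ≤ k by omega) a, cf_stable ψ0 (show p.2 ≤ k by omega) b]
  map_zero' := by
    ext k
    rw [coeff_mk]
    rw [cf_eq ψ0 (Nat.le_succ k) 0 (f := 0) (by rw [map_zero, map_zero])]
  map_add' a b := by
    ext k
    rw [map_add, coeff_mk, coeff_mk, coeff_mk]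
    have h1 : Ideal.Quotient.mk (Iexp K k) (rep (tower ψ0 k a) + rep (tower ψ0 k b)) =
        tower ψ0 k (a + b) := by
      rw [map_add, map_add, rep_spec, rep_spec]
    rw [cf_eq ψ0 (Nat.le_succ k) (a + b) h1, map_add,
      cf_eq ψ0 (Nat.le_succ k) a (rep_spec _), cf_eq ψ0 (Nat.le_succ k) b (rep_spec _)]
  commutes' c := by
    ext k
    rw [coeff_mk]
    have h1 : Ideal.Quotient.mk (Iexp K k) (algebraMap K K⟦X⟧ c) = tower ψ0 k (algebraMap K A c) := by
      rw [AlgHom.commutes]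
      have : Ideal.Quotient.mk (Iexp K k) (algebraMap K K⟦X⟧ c) =
          Ideal.Quotient.mkₐ K (Iexp K k) (algebraMap K K⟦X⟧ c) := rfl
      rw [this, AlgHom.commutes]
    rw [cf_eq ψ0 (Nat.le_succ k) _ h1]

lemma limitF_coeff_one (ψ0 : A →ₐ[K] K⟦X⟧ ⧸ Iexp K 0) (a : A) {f : K⟦X⟧}
    (hf : Ideal.Quotient.mk (Iexp K 0) f = ψ0 a) :
    coeff 1 (limitF ψ0 a) = coeff 1 f := by
  have h0 : coeff 1 (limitF ψ0 a) = cf ψ0 1 1 a := by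
    show coeff 1 (PowerSeries.mk fun k => cf ψ0 k k a) = _
    rw [coeff_mk]
  rw [h0, cf_succ ψ0 (le_refl 1) a, cf_eq ψ0 (le_refl 1) a (f := f) hf]

end Tower


section Base

variable {K A : Type u} [Field K] [CommRing A] [Algebra K A]

lemma base_hom (φ : A →ₐ[K] K)
    (δ : A → K) (hadd : ∀ a b, δ (a + b) = δ a + δ b)
    (halg : ∀ k : K, δ (algebraMap K A k) = 0)
    (hleib : ∀ a b, δ (a * b) = φ a * δ b + φ b * δ a) :
    ∃ ψ0 : A →ₐ[K] (K⟦X⟧ ⧸ Iexp K 0), ∀ a : A,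
      Ideal.Quotient.mk (Iexp K 0) (C (φ a) + C (δ a) * X) = ψ0 a := by
  have hδ1 : δ 1 = 0 := by
    have h := hleib 1 1
    rw [one_mul, map_one, one_mul] at h
    exact left_eq_add.mp h
  have hδ0 : δ 0 = 0 := by
    have h := hadd 0 0
    rw [add_zero] at h
    exact left_eq_add.mp h
  have hmk : ∀ c : K, Ideal.Quotient.mk (Iexp K 0) (C c) =
      algebraMap K (K⟦X⟧ ⧸ Iexp K 0) c := by
    intro c
    have h1 : algebraMap K (K⟦X⟧ ⧸ Iexp K 0) c =
        Ideal.Quotient.mk (Iexp K 0) (algebraMap K (K⟦X⟧) c) := rfl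
    rw [h1, PowerSeries.algebraMap_apply]
    simp
  refine ⟨{ toFun := fun a => Ideal.Quotient.mk (Iexp K 0) (C (φ a) + C (δ a) * X)
            map_one' := ?_
            map_mul' := ?_
            map_zero' := ?_
            map_add' := ?_
            commutes' := ?_ }, fun a => rfl⟩
  · show Ideal.Quotient.mk (Iexp K 0) (C (φ 1) + C (δ 1) * X) = 1
    rw [map_one, hδ1, map_zero, zero_mul, add_zero, map_one, map_one]
  · intro a b
    show Ideal.Quotient.mk (Iexp K 0) (C (φ (a * b)) + C (δ (a * b)) * X) =
      Ideal.Quotient.mk (Iexp K 0) (C (φ a) + C (δ a) * X) *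
      Ideal.Quotient.mk (Iexp K 0) (C (φ b) + C (δ b) * X)
    rw [← map_mul]
    rw [Ideal.Quotient.eq, Iexp_def K 0]
    refine Ideal.mem_span_singleton'.mpr ⟨-(C (δ a) * C (δ b)), ?_⟩
    rw [hleib a b, map_mul]
    simp only [map_add, map_mul]
    ring
  · show Ideal.Quotient.mk (Iexp K 0) (C (φ 0) + C (δ 0) * X) = 0
    simp [hδ0]
  · intro a b
    show Ideal.Quotient.mk (Iexp K 0) (C (φ (a + b)) + C (δ (a + b)) * X) =
      Ideal.Quotient.mk (Iexp K 0) (C (φ a) + C (δ a) * X) +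
      Ideal.Quotient.mk (Iexp K 0) (C (φ b) + C (δ b) * X)
    rw [← map_add]
    congr 1
    rw [map_add φ, hadd, map_add, map_add]
    ring
  · intro c
    show Ideal.Quotient.mk (Iexp K 0) (C (φ (algebraMap K A c)) + C (δ (algebraMap K A c)) * X) = _
    rw [AlgHom.commutes, halg, map_zero, zero_mul, add_zero, hmk]
    simp

lemma exists_coeff_one_ne {K A : Type u} [Field K] [CommRing A] [IsDomain A] [Algebra K A]
    [Algebra.FormallySmooth K A] (hnoeth : IsNoetherianRing A) (hdim : ringKrullDim A = 1)
    (φ : A →ₐ[K] K) : ∃ (F : A →ₐ[K] K⟦X⟧) (a : A), coeff 1 (F a) ≠ 0 := by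
  obtain ⟨δ, hadd, halg, hleib, x, hφx, hδx⟩ := exists_deriv hnoeth hdim φ
  obtain ⟨ψ0, hψ0⟩ := base_hom φ δ hadd halg hleib
  refine ⟨limitF ψ0, x, ?_⟩
  rw [limitF_coeff_one ψ0 x (f := C (φ x) + C (δ x) * X) (hψ0 x)]
  simpa using hδx

lemma hom_of_sol {K A L : Type u} [Field K] [CommRing A] [Algebra K A] [CommRing L] [Algebra K L]
    {n : ℕ} (fs : MvPolynomial (Fin n) K →ₐ[K] A) (hfs : Function.Surjective fs)
    {s : Finset (MvPolynomial (Fin n) K)} (hs : Ideal.span (s : Set (MvPolynomial (Fin n) K)) = RingHom.ker fs)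
    (x : Fin n → L) (hx : ∀ p ∈ s, MvPolynomial.aeval x p = 0) :
    ∃ g : A →ₐ[K] L, ∀ p, g (fs p) = MvPolynomial.aeval x p := by
  have hker : ∀ p ∈ RingHom.ker fs, MvPolynomial.aeval x p = 0 := by
    intro p hp
    rw [← hs] at hp
    refine Submodule.span_induction ?_ ?_ ?_ ?_ hp
    · intro q hq; exact hx q hq
    · simp
    · intro a b _ _ ha hb; rw [map_add, ha, hb, add_zero]
    · intro a b _ hb
      rw [smul_eq_mul, map_mul, hb, mul_zero]
  let e := Ideal.quotientKerAlgEquivOfSurjective hfs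
  refine ⟨(Ideal.Quotient.liftₐ (RingHom.ker fs) (MvPolynomial.aeval x) hker).comp
    e.symm.toAlgHom, fun p => ?_⟩
  have he : e (Ideal.Quotient.mk (RingHom.ker fs) p) = fs p := by
    simp only [e, Ideal.quotientKerAlgEquivOfSurjective,
      Ideal.quotientKerAlgEquivOfRightInverse_apply]
    exact RingHom.kerLift_mk _ p
  have hsymm : e.symm (fs p) = Ideal.Quotient.mk (RingHom.ker fs) p := by
    rw [← he, AlgEquiv.symm_apply_apply]
  show (Ideal.Quotient.liftₐ (RingHom.ker fs) (MvPolynomial.aeval x) hker) (e.symm.toAlgHom (fs p)) = _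
  rw [AlgEquiv.toAlgHom_apply, hsymm, Ideal.Quotient.liftₐ_apply]
  rfl

end Base

/-- Existentially closed `C`-avoiding fields are large: a smooth affine curve
over `K` with a `K`-rational point has infinitely many `K`-rational points. -/
theorem stmt17 (K : Type u) [Field K] (hK : ECAvoidsC K)
    (A : Type u) [CommRing A] [IsDomain A] [Algebra K A]
    (hfg : Algebra.FiniteType K A) (hdim : ringKrullDim A = 1)
    (hsm : Algebra.Smooth K A) (hpt : Nonempty (A →ₐ[K] K)) :
    Infinite (A →ₐ[K] K) := by
  classical
  obtain ⟨hchar, havoidK, hec⟩ := hK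
  rw [← not_finite_iff_infinite]
  intro hfin
  obtain ⟨φ⟩ := hpt
  haveI : Algebra.FormallySmooth K A := hsm.formallySmooth
  haveI : Algebra.FiniteType K A := hfg
  have hnoeth : IsNoetherianRing A := Algebra.FiniteType.isNoetherianRing K A
  obtain ⟨F, a0, ha0⟩ := exists_coeff_one_ne hnoeth hdim φ
  set L := FractionRing (K⟦X⟧) with hL
  let ψ : A →ₐ[K] L := (IsScalarTower.toAlgHom K (K⟦X⟧) L).comp F
  have hψ : ψ a0 ∉ Set.range (algebraMap K L) := by
    rintro ⟨c, hc⟩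
    have h1 : algebraMap (K⟦X⟧) L (F a0) = algebraMap (K⟦X⟧) L (algebraMap K (K⟦X⟧) c) := by
      rw [← IsScalarTower.algebraMap_apply, hc]; rfl
    have h2 : F a0 = algebraMap K (K⟦X⟧) c := IsFractionRing.injective (K⟦X⟧) L h1
    have h3 := congrArg (coeff 1) h2
    rw [PowerSeries.algebraMap_apply] at h3
    simp at h3
    exact ha0 h3
  obtain ⟨n, fs, hfs⟩ := Algebra.FiniteType.iff_quotient_mvPolynomial''.mp hfg
  obtain ⟨s, hs⟩ := (isNoetherianRing_iff.mp (inferInstance : IsNoetherianRing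
    (MvPolynomial (Fin n) K))).noetherian (RingHom.ker fs)
  set xs : Fin n → L := fun j => ψ (fs (MvPolynomial.X j)) with hxs
  have haev : ∀ p, MvPolynomial.aeval xs p = ψ (fs p) := by
    intro p
    have hcomp : (ψ.comp fs : MvPolynomial (Fin n) K →ₐ[K] L) = MvPolynomial.aeval xs := by
      apply MvPolynomial.algHom_ext
      intro j
      simp [hxs]
    rw [← hcomp]
    rfl
  have hxseq : ∀ p ∈ s, MvPolynomial.aeval xs p = 0 := by
    intro p hp
    rw [haev]
    have hpk : p ∈ RingHom.ker fs := hs ▸ Ideal.subset_span hp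
    rw [RingHom.mem_ker] at hpk
    rw [hpk, map_zero]
  obtain ⟨P, hP⟩ := hfs a0
  have hj0 : ∃ j, xs j ∉ Set.range (algebraMap K L) := by
    by_contra hcon
    push_neg at hcon
    choose c hc using hcon
    have hcomp2 : ((Algebra.ofId K L).comp (MvPolynomial.aeval c) :
        MvPolynomial (Fin n) K →ₐ[K] L) = MvPolynomial.aeval xs := by
      apply MvPolynomial.algHom_ext
      intro j
      simp [Algebra.ofId_apply, hc j]
    apply hψ
    refine ⟨MvPolynomial.aeval c P, ?_⟩
    have := congrArg (fun q : MvPolynomial (Fin n) K →ₐ[K] L => q P) hcomp2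
    simp only [AlgHom.comp_apply] at this
    rw [show (algebraMap K L) ((MvPolynomial.aeval c) P) =
      (Algebra.ofId K L) ((MvPolynomial.aeval c) P) from rfl, this, haev, hP]
  obtain ⟨j0, hj0⟩ := hj0
  haveI : Fintype (A →ₐ[K] K) := Fintype.ofFinite _
  set t : Finset (MvPolynomial (Fin n) K) :=
    Finset.image (fun g : A →ₐ[K] K =>
      MvPolynomial.X j0 - MvPolynomial.C (g (fs (MvPolynomial.X j0)))) Finset.univ with ht
  have havoidL : AvoidsC L := avoidsC_frac havoidK
  have hineq : ∀ q ∈ t, MvPolynomial.aeval xs q ≠ 0 := by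
    intro q hq
    rw [ht, Finset.mem_image] at hq
    obtain ⟨g, -, rfl⟩ := hq
    rw [map_sub, MvPolynomial.aeval_X, MvPolynomial.aeval_C]
    intro h0
    exact hj0 ⟨g (fs (MvPolynomial.X j0)), (sub_eq_zero.mp h0).symm⟩
  obtain ⟨x', hx'eq, hx'ne⟩ := hec L havoidL n s t ⟨xs, hxseq, hineq⟩
  obtain ⟨g', hg'⟩ := hom_of_sol fs hfs hs x' hx'eq
  have hmem : MvPolynomial.X j0 - MvPolynomial.C (g' (fs (MvPolynomial.X j0))) ∈ t :=
    Finset.mem_image.mpr ⟨g', Finset.mem_univ g', rfl⟩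
  apply hx'ne _ hmem
  have h1 : g' (fs (MvPolynomial.X j0)) = x' j0 := by
    rw [hg', MvPolynomial.aeval_X]
  rw [map_sub, MvPolynomial.aeval_X, MvPolynomial.aeval_C, h1]
  simp
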